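/- arXiv:2508.12003 — 3 statements merged into one kernel-verified Lean document; each statement's English description precedes it below -/
import Mathlib

section
/- Let Θ_k : X → ℝ be strongly convex with Θ_k(v̄) its minimum over a linear subspace T attained at v̄ ∈ T, and let v ∈ T satisfy Θ_k(v) ≤ Θ_k(0) and Θ_k(v) − Θ_k(v̄) ≤ (μ/2)‖v‖². Then v = 0 if and only if v̄ = 0. -/
open scoped RealInnerProductSpace

/-- For the strongly convex subproblem objective
`Θ_k(v) = ⟨g,v⟩ + (1/2)⟨v,Qv⟩ + ϑ(c + Av) + r` with `Q ⪰ αI` self-adjoint (`α > 0`) and `ϑ`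
convex, let `v̄` minimize `Θ_k` over a subspace `T` and let `v ∈ T` satisfy `Θ_k(v) ≤ Θ_k(0)`
and `Θ_k(v) − Θ_k(v̄) ≤ (μ/2)‖v‖²`.  Then `v = 0` if and only if `v̄ = 0`. -/
theorem inexact_solution_zero_iff
    {X Z : Type*} [NormedAddCommGroup X] [InnerProductSpace ℝ X] [FiniteDimensional ℝ X]
    [NormedAddCommGroup Z] [InnerProductSpace ℝ Z] [FiniteDimensional ℝ Z]
    (g : X) (r : ℝ) (Q : X →L[ℝ] X)
    (hQsa : ∀ u w : X, ⟪Q u, w⟫ = ⟪u, Q w⟫)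
    (α : ℝ) (hα : 0 < α)
    (hQpd : ∀ u : X, α * ‖u‖ ^ 2 ≤ ⟪u, Q u⟫)
    (A : X →L[ℝ] Z) (c : Z) (ϑ : Z → ℝ) (hϑ : ConvexOn ℝ Set.univ ϑ)
    (Θk : X → ℝ)
    (hΘk : Θk = fun u => ⟪g, u⟫ + (1/2) * ⟪u, Q u⟫ + ϑ (c + A u) + r)
    (T : Submodule ℝ X)
    (vb : X) (hvbT : vb ∈ T) (hmin : ∀ w ∈ T, Θk vb ≤ Θk w)
    (μ : ℝ) (hμ : 0 < μ)
    (v : X) (hvT : v ∈ T)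
    (hdesc : Θk v ≤ Θk 0)
    (hineq : Θk v - Θk vb ≤ μ / 2 * ‖v‖ ^ 2) :
    v = 0 ↔ vb = 0 := by
  -- Key growth estimate: for every w ∈ T, (α/4)‖w - vb‖² ≤ Θk w - Θk vb.
  have key : ∀ w ∈ T, α / 4 * ‖w - vb‖ ^ 2 ≤ Θk w - Θk vb := by
    intro w hw
    set m : X := (1/2 : ℝ) • (vb + w) with hm
    have hmT : m ∈ T := T.smul_mem _ (T.add_mem hvbT hw)
    have h1 : Θk vb ≤ Θk m := hmin m hmT
    have hsym : ⟪w, Q vb⟫ = ⟪vb, Q w⟫ := by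
      rw [real_inner_comm, hQsa]
    have hm_inner : ⟪m, Q m⟫
        = (1/4) * (⟪vb, Q vb⟫ + 2 * ⟪vb, Q w⟫ + ⟪w, Q w⟫) := by
      simp only [hm, map_smul, map_add, real_inner_smul_left, real_inner_smul_right,
        inner_add_left, inner_add_right]
      rw [hsym]; ring
    have hg : ⟪g, m⟫ = (1/2) * (⟪g, vb⟫ + ⟪g, w⟫) := by
      simp only [hm, real_inner_smul_right, inner_add_right]
    have hd : ⟪w - vb, Q (w - vb)⟫
        = ⟪w, Q w⟫ - 2 * ⟪vb, Q w⟫ + ⟪vb, Q vb⟫ := by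
      simp only [map_sub, inner_sub_left, inner_sub_right]
      rw [hsym]; ring
    have hAm : c + A m = (1/2 : ℝ) • (c + A vb) + (1/2 : ℝ) • (c + A w) := by
      simp only [hm, map_smul, map_add, smul_add]
      module
    have hϑm : ϑ (c + A m) ≤ (1/2) * ϑ (c + A vb) + (1/2) * ϑ (c + A w) := by
      have := hϑ.2 (Set.mem_univ (c + A vb)) (Set.mem_univ (c + A w))
        (by norm_num : (0:ℝ) ≤ 1/2) (by norm_num : (0:ℝ) ≤ 1/2) (by norm_num)
      rw [hAm]
      simpa [smul_eq_mul] using this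
    have hQd := hQpd (w - vb)
    subst hΘk
    simp only [hm_inner, hg, hd] at *
    nlinarith [h1, hϑm, hQd]
  constructor
  · intro hv0
    subst hv0
    have h0 : Θk vb ≤ Θk 0 := hmin 0 T.zero_mem
    have h1 := key 0 T.zero_mem
    have hΘ0 : Θk 0 - Θk vb ≤ 0 := by
      simpa using hineq
    have : α / 4 * ‖(0:X) - vb‖ ^ 2 ≤ 0 := le_trans h1 hΘ0
    have hnorm : ‖(0:X) - vb‖ ^ 2 ≤ 0 := by
      nlinarith [sq_nonneg ‖(0:X) - vb‖]
    have : ‖(0:X) - vb‖ = 0 := by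
      nlinarith [norm_nonneg ((0:X) - vb), sq_nonneg ‖(0:X) - vb‖]
    have := norm_eq_zero.mp this
    have : vb = 0 := by
      have h := this
      rwa [zero_sub, neg_eq_zero] at h
    exact this
  · intro hvb0
    subst hvb0
    have h1 := key v hvT
    have hle : Θk v - Θk 0 ≤ 0 := by linarith
    have : α / 4 * ‖v - 0‖ ^ 2 ≤ 0 := le_trans h1 hle
    rw [sub_zero] at this
    have h4 : (0:ℝ) < α / 4 := by linarith
    have hle2 : α / 4 * ‖v‖ ^ 2 ≤ α / 4 * 0 := by simpa using this
    have hx : ‖v‖ ^ 2 ≤ 0 := (mul_le_mul_iff_right₀ h4).mp hle2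
    have hx0 : ‖v‖ ^ 2 = 0 := le_antisymm hx (sq_nonneg _)
    have : ‖v‖ = 0 := by
      have := pow_eq_zero_iff (n := 2) (by norm_num) |>.mp hx0
      exact this
    exact norm_eq_zero.mp this
end

section
/- Let ϑ : Z → ℝ be convex, and let x̄ be such that 0 ∈ ∇f(x̄) + Q v̄ + ∇F(x̄) ∂ϑ(F(x̄) + F'(x̄) v̄) + N, where N is the orthogonal complement of a subspace T containing v̄, Q is a self-adjoint linear operator with ‖Q‖ ≤ α*, and set z̄ = F(x̄) + F'(x̄) v̄. Then there exists ξ̄ ∈ ∂ϑ(z̄) such that max{ ‖Π_T(∇f(x̄) + ∇F(x̄) ξ̄)‖, ‖F(x̄) − z̄‖ } ≤ max{α*, ‖F'(x̄)‖} · ‖v̄‖. -/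
open scoped RealInnerProductSpace

/-- The convex subdifferential of `ϑ` at `z`. -/
def subdiff {Z : Type*} [NormedAddCommGroup Z] [InnerProductSpace ℝ Z]
    (ϑ : Z → ℝ) (z : Z) : Set Z :=
  {ξ | ∀ w : Z, ϑ z + ⟪ξ, w - z⟫ ≤ ϑ w}

/-- If `0 ∈ ∇f(x̄) + Qv̄ + ∇F(x̄)∂ϑ(z̄) + N` with `N = Tᗮ`, `v̄ ∈ T`,
`‖Q‖ ≤ α*` and `z̄ = F(x̄) + F'(x̄)v̄`, then there is `ξ̄ ∈ ∂ϑ(z̄)` with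
`max{‖Π_T(∇f(x̄) + ∇F(x̄)ξ̄)‖, ‖F(x̄) − z̄‖} ≤ max{α*, ‖F'(x̄)‖}·‖v̄‖`. -/
theorem eps_stationary_bound
    {X Z : Type*} [NormedAddCommGroup X] [InnerProductSpace ℝ X] [FiniteDimensional ℝ X]
    [NormedAddCommGroup Z] [InnerProductSpace ℝ Z] [FiniteDimensional ℝ Z]
    (f : X → ℝ) (F : X → Z) (ϑ : Z → ℝ) (hϑ : ConvexOn ℝ Set.univ ϑ)
    (hf : Differentiable ℝ f) (hF : Differentiable ℝ F)
    (xb vb : X) (T : Submodule ℝ X) (hvbT : vb ∈ T)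
    (Q : X →L[ℝ] X) (hQsa : ∀ u w : X, ⟪Q u, w⟫ = ⟪u, Q w⟫)
    (αstar : ℝ) (hQ : ‖Q‖ ≤ αstar)
    (zb : Z) (hzb : zb = F xb + fderiv ℝ F xb vb)
    (hopt : ∃ ξ ∈ subdiff ϑ zb, ∃ n ∈ Tᗮ,
      gradient f xb + Q vb + ContinuousLinearMap.adjoint (fderiv ℝ F xb) ξ + n = 0) :
    ∃ ξb ∈ subdiff ϑ zb,
      max ‖(Submodule.orthogonalProjectionOnto T
              (gradient f xb + ContinuousLinearMap.adjoint (fderiv ℝ F xb) ξb) : X)‖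
          ‖F xb - zb‖
        ≤ max αstar ‖fderiv ℝ F xb‖ * ‖vb‖ := by
  obtain ⟨ξ, hξ, n, hn, heq⟩ := hopt
  refine ⟨ξ, hξ, ?_⟩
  have hkey : gradient f xb + ContinuousLinearMap.adjoint (fderiv ℝ F xb) ξ
      = -(Q vb) - n := by
    have := heq
    abel_nf at this ⊢
    linear_combination (norm := module) this
  rw [max_le_iff]
  constructor
  · rw [hkey]
    have h1 : (Submodule.orthogonalProjectionOnto T (-(Q vb) - n) : X)
        = (Submodule.orthogonalProjectionOnto T (-(Q vb)) : X) := by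
      rw [sub_eq_add_neg, map_add, map_neg, map_neg,
        Submodule.orthogonalProjectionOnto_apply_of_mem_orthogonal hn]
      simp
    rw [h1]
    calc ‖(Submodule.orthogonalProjectionOnto T (-(Q vb)) : X)‖
        ≤ ‖Submodule.orthogonalProjectionOnto T‖ * ‖-(Q vb)‖ :=
          (Submodule.orthogonalProjectionOnto T).le_opNorm _
      _ ≤ 1 * ‖-(Q vb)‖ := by
          gcongr; exact T.orthogonalProjectionOnto_norm_le
      _ = ‖-(Q vb)‖ := one_mul _
      _ = ‖Q vb‖ := norm_neg _
      _ ≤ ‖Q‖ * ‖vb‖ := Q.le_opNorm vb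
      _ ≤ max αstar ‖fderiv ℝ F xb‖ * ‖vb‖ := by
          gcongr
          exact le_max_of_le_left hQ
  · rw [hzb]
    have : F xb - (F xb + fderiv ℝ F xb vb) = -(fderiv ℝ F xb vb) := by abel
    rw [this, norm_neg]
    calc ‖fderiv ℝ F xb vb‖ ≤ ‖fderiv ℝ F xb‖ * ‖vb‖ := (fderiv ℝ F xb).le_opNorm vb
      _ ≤ max αstar ‖fderiv ℝ F xb‖ * ‖vb‖ := by gcongr; exact le_max_right _ _
end

section
/- Let {ω_k} be a nonincreasing sequence of positive reals converging to 0 such that ω_k^{2q} ≤ c₁(ω_{k−1} − ω_k) for all large k, where q ∈ (1/2, 1) and c₁ > 0. Then there exists γ₁ > 0 such that ω_k ≤ γ₁ k^{1/(1−2q)} for all large k. -/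
set_option maxHeartbeats 1000000


open Filter

/-- Bernoulli inequality for exponents in `[-1, 0]` and positive base. -/
lemma bernoulli_neg_aux {x p : ℝ} (hx : 0 < x) (hp0 : p ≤ 0) (hp1 : -1 ≤ p) :
    1 + p * (x - 1) ≤ x ^ p := by
  have hs : (-1:ℝ) ≤ x - 1 := by linarith
  have h1 : x ^ (-p) ≤ 1 + (-p) * (x - 1) := by
    have := rpow_one_add_le_one_add_mul_self hs (by linarith : (0:ℝ) ≤ -p)
      (by linarith : -p ≤ 1)
    have hx1 : 1 + (x - 1) = x := by ring
    rwa [hx1] at this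
  have hxp : 0 < x ^ (-p) := Real.rpow_pos_of_pos hx _
  set v : ℝ := 1 + (-p) * (x - 1) with hv
  have hv0 : 0 < v := lt_of_lt_of_le hxp h1
  have h2 : (1 + p * (x - 1)) * v ≤ 1 := by
    have : (1 + p * (x - 1)) * v = 1 - (p * (x - 1))^2 := by rw [hv]; ring
    nlinarith [sq_nonneg (p * (x - 1))]
  have h3 : 1 + p * (x - 1) ≤ v⁻¹ := by
    rw [inv_eq_one_div, le_div_iff₀ hv0]
    exact h2
  have h4 : v⁻¹ ≤ x ^ p := by
    have : x ^ p = (x ^ (-p))⁻¹ := by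
      rw [← Real.rpow_neg hx.le, neg_neg]
    rw [this]
    exact inv_anti₀ hxp h1
  linarith

/-- Sublinear rate from the KL-exponent recursion.  If `{ω_k}` is a
nonincreasing positive sequence converging to `0` with `ω_k^{2q} ≤ c₁(ω_{k−1} − ω_k)` for all
large `k`, where `q ∈ (1/2, 1)` and `c₁ > 0`, then `ω_k ≤ γ₁ k^{1/(1−2q)}` for all large `k`,
for some `γ₁ > 0`. -/
theorem kl_sublinear_rate
    (ω : ℕ → ℝ) (q c₁ : ℝ)
    (hq : q ∈ Set.Ioo (1/2 : ℝ) 1) (hc₁ : 0 < c₁)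
    (hpos : ∀ k, 0 < ω k)
    (hmono : ∀ k, ω (k + 1) ≤ ω k)
    (hlim : Tendsto ω atTop (nhds 0))
    (K₀ : ℕ) (hrec : ∀ k ≥ K₀ + 1, ω k ^ (2 * q) ≤ c₁ * (ω (k - 1) - ω k)) :
    ∃ γ₁ > (0:ℝ), ∃ K : ℕ, ∀ k ≥ K, ω k ≤ γ₁ * (k : ℝ) ^ (1 / (1 - 2 * q)) := by
  obtain ⟨hq1, hq2⟩ := hq
  set θ : ℝ := 2 * q with hθ
  have hθ1 : 1 < θ := by rw [hθ]; linarith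
  have hθ2 : θ < 2 := by rw [hθ]; linarith
  set p : ℝ := 1 - 2 * q with hpdef
  have hpθ : p = 1 - θ := rfl
  have hp0 : p < 0 := by rw [hpdef]; linarith
  have hp1 : -1 < p := by rw [hpdef]; linarith
  set μ : ℝ := (θ - 1) / (2 * c₁) with hμ
  have hμ0 : 0 < μ := div_pos (by linarith) (by linarith)
  have hc₂e : 0 < (θ - 1) / θ := div_pos (by linarith) (by linarith)
  set c₂ : ℝ := (2:ℝ) ^ ((θ - 1) / θ) - 1 with hc₂
  have hc₂0 : 0 < c₂ := by
    have : (1:ℝ) < (2:ℝ) ^ ((θ - 1) / θ) :=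
      Real.one_lt_rpow_iff_of_pos (by norm_num) |>.mpr (Or.inl ⟨by norm_num, hc₂e⟩)
    rw [hc₂]
    linarith
  set ε : ℝ := (μ / c₂) ^ (1 / p) with hε
  have hμc : 0 < μ / c₂ := div_pos hμ0 hc₂0
  have hε0 : 0 < ε := Real.rpow_pos_of_pos hμc _
  have hεp : ε ^ p = μ / c₂ := by
    rw [hε, ← Real.rpow_mul hμc.le, one_div_mul_cancel hp0.ne, Real.rpow_one]
  -- eventually ω k ≤ ε
  have hev : ∀ᶠ k in atTop, ω k < ε := hlim.eventually (gt_mem_nhds hε0)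
  obtain ⟨K₂, hK₂⟩ := eventually_atTop.mp hev
  set K₁ : ℕ := max K₂ K₀ with hK₁def
  -- key step
  have step : ∀ k ≥ K₁, ω k ^ p + μ ≤ ω (k + 1) ^ p := by
    intro k hk
    set a : ℝ := ω (k + 1) with ha
    set b : ℝ := ω k with hb
    have ha0 : 0 < a := hpos _
    have hb0 : 0 < b := hpos _
    have hab : a ≤ b := hmono k
    have hbε : b ≤ ε := (hK₂ k (le_trans (le_max_left _ _) hk)).le
    have hrec' : a ^ θ ≤ c₁ * (b - a) := by
      have := hrec (k + 1) (by omega)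
      simpa using this
    have hba : a ^ θ / c₁ ≤ b - a := (div_le_iff₀' hc₁).mpr hrec'
    by_cases hcase : b ^ θ ≤ 2 * a ^ θ
    · -- close case: Bernoulli
      have hx0 : 0 < a / b := div_pos ha0 hb0
      have hbern : 1 + p * (a / b - 1) ≤ (a / b) ^ p :=
        bernoulli_neg_aux hx0 hp0.le hp1.le
      have hsplit : (a / b) ^ p = a ^ p / b ^ p := Real.div_rpow ha0.le hb0.le p
      have hbp : 0 < b ^ p := Real.rpow_pos_of_pos hb0 _
      have h5 : (1 + p * (a / b - 1)) * b ^ p ≤ a ^ p := by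
        calc (1 + p * (a / b - 1)) * b ^ p ≤ (a / b) ^ p * b ^ p :=
              mul_le_mul_of_nonneg_right hbern hbp.le
          _ = a ^ p := by rw [hsplit]; field_simp
      have hT : (1 + p * (a / b - 1)) * b ^ p = b ^ p + (θ - 1) * ((b - a) / b * b ^ p) := by
        field_simp
        ring
      have hgain : μ ≤ (θ - 1) * ((b - a) / b * b ^ p) := by
        have hbθ : b ^ θ / (2 * c₁) ≤ b - a := by
          calc b ^ θ / (2 * c₁) ≤ a ^ θ / c₁ := by
                rw [div_le_div_iff₀ (by linarith) hc₁]
                nlinarith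
            _ ≤ b - a := hba
        have hkey : b ^ θ * b ^ p / b = 1 := by
          rw [← Real.rpow_add hb0]
          have : θ + p = 1 := by rw [hpθ]; ring
          rw [this, Real.rpow_one, div_self hb0.ne']
        calc μ = (θ - 1) / (2 * c₁) * (b ^ θ * b ^ p / b) := by rw [hkey, hμ, mul_one]
          _ = (θ - 1) * (b ^ θ / (2 * c₁) / b * b ^ p) := by ring
          _ ≤ (θ - 1) * ((b - a) / b * b ^ p) := by
              apply mul_le_mul_of_nonneg_left _ (by linarith)
              apply mul_le_mul_of_nonneg_right _ hbp.le
              gcongr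
      linarith [hT ▸ h5]
    · -- far case
      push_neg at hcase
      have hx0 : 0 < a / b := div_pos ha0 hb0
      have hbp : 0 < b ^ p := Real.rpow_pos_of_pos hb0 _
      have hratio : a / b ≤ (2:ℝ) ^ (-(1/θ)) := by
        have h6 : (a / b) ^ θ ≤ 1 / 2 := by
          rw [Real.div_rpow ha0.le hb0.le, div_le_div_iff₀ (Real.rpow_pos_of_pos hb0 θ) two_pos]
          · nlinarith [Real.rpow_pos_of_pos hb0 θ]
        have h7 : ((a / b) ^ θ) ^ (1/θ) ≤ ((1:ℝ)/2) ^ (1/θ) :=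
          Real.rpow_le_rpow (Real.rpow_nonneg hx0.le θ) h6 (by positivity)
        have h8 : ((a / b) ^ θ) ^ (1/θ) = a / b := by
          rw [← Real.rpow_mul hx0.le, mul_one_div, div_self (by linarith : θ ≠ 0), Real.rpow_one]
        have h9 : ((1:ℝ)/2) ^ (1/θ) = (2:ℝ) ^ (-(1/θ)) := by
          rw [show (1:ℝ)/2 = 2⁻¹ by norm_num, Real.inv_rpow (by norm_num),
            ← Real.rpow_neg (by norm_num)]
        rw [h8, h9] at h7
        exact h7
      have hrp : (1 + c₂) ≤ (a / b) ^ p := by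
        have h10 : ((2:ℝ) ^ (-(1/θ))) ^ p ≤ (a / b) ^ p :=
          Real.rpow_le_rpow_of_nonpos hx0 hratio hp0.le
        have h11 : ((2:ℝ) ^ (-(1/θ))) ^ p = (2:ℝ) ^ ((θ - 1) / θ) := by
          rw [← Real.rpow_mul (by norm_num : (0:ℝ) ≤ 2)]
          congr 1
          rw [hpθ]
          field_simp
          ring
        rw [h11] at h10
        rw [hc₂]
        linarith
      have h12 : (1 + c₂) * b ^ p ≤ a ^ p := by
        calc (1 + c₂) * b ^ p ≤ (a / b) ^ p * b ^ p :=
              mul_le_mul_of_nonneg_right hrp hbp.le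
          _ = a ^ p := by rw [Real.div_rpow ha0.le hb0.le p]; field_simp
      have h13 : ε ^ p ≤ b ^ p := Real.rpow_le_rpow_of_nonpos hb0 hbε hp0.le
      have h14 : μ ≤ c₂ * b ^ p := by
        calc μ = c₂ * (μ / c₂) := by field_simp
          _ = c₂ * ε ^ p := by rw [hεp]
          _ ≤ c₂ * b ^ p := mul_le_mul_of_nonneg_left h13 hc₂0.le
      have h15 : (1 + c₂) * b ^ p = b ^ p + c₂ * b ^ p := by ring
      rw [h15] at h12
      linarith
  -- induction
  have key : ∀ n : ℕ, μ * n ≤ ω (K₁ + n) ^ p := by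
    intro n
    induction n with
    | zero => simp [Real.rpow_pos_of_pos (hpos K₁) p |>.le]
    | succ m ih =>
      have h := step (K₁ + m) (Nat.le_add_right _ _)
      have heq : K₁ + (m + 1) = (K₁ + m) + 1 := by omega
      rw [heq]
      push_cast at ih ⊢
      linarith
  refine ⟨(μ / 2) ^ (1 / p), Real.rpow_pos_of_pos (by linarith) _, 2 * K₁ + 2, ?_⟩
  intro k hk
  have hkK : K₁ ≤ k := by omega
  have hk1 : 1 ≤ k := by omega
  have hn : μ * (k - K₁ : ℕ) ≤ ω k ^ p := by
    have := key (k - K₁)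
    rwa [Nat.add_sub_cancel' hkK] at this
  have hhalf : (μ / 2) * k ≤ μ * (k - K₁ : ℕ) := by
    have h2n : (k:ℝ) ≤ 2 * ((k - K₁ : ℕ) : ℝ) := by
      have : k ≤ 2 * (k - K₁) := by omega
      exact_mod_cast this
    nlinarith
  have hA : (0:ℝ) < μ / 2 * k := by
    have : (0:ℝ) < (k:ℝ) := by exact_mod_cast hk1
    positivity
  have hωp : μ / 2 * k ≤ ω k ^ p := le_trans hhalf hn
  have final : ω k ≤ (μ / 2 * k) ^ (1 / p) := by
    have h15 : (ω k ^ p) ^ (1 / p) ≤ (μ / 2 * k) ^ (1 / p) :=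
      Real.rpow_le_rpow_of_nonpos hA hωp (by
        exact le_of_lt (div_neg_of_pos_of_neg one_pos hp0) |>.trans_eq (by norm_num) )
    have h16 : (ω k ^ p) ^ (1 / p) = ω k := by
      rw [← Real.rpow_mul (hpos k).le, mul_one_div, div_self hp0.ne, Real.rpow_one]
    rwa [h16] at h15
  calc ω k ≤ (μ / 2 * k) ^ (1 / p) := final
    _ = (μ / 2) ^ (1 / p) * (k:ℝ) ^ (1 / p) := Real.mul_rpow (by linarith) (Nat.cast_nonneg k)
end
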